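/- arXiv:1812.09470 — 2 statements merged into one kernel-verified Lean document; each statement's English description precedes it below -/
import Mathlib

section
/- Let M be a prime ideal in a polynomial ring that contains no monomials, and let 𝔪 be an ideal generated by monomials. If I = M ∩ 𝔪, then the colon ideal (I : 𝔪) equals M. -/
/-- Let `M` be a prime ideal of `ℂ[x_1,…,x_d]` containing no monomial, and let `mm`
be an ideal generated by a (nonempty) set of monomials.  If `I = M ⊓ mm`, then the
colon ideal `(I : mm)` equals `M`. -/
theorem colon_inter_monomial_ideal {d : ℕ} (M mm : Ideal (MvPolynomial (Fin d) ℂ))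
    (hM : M.IsPrime)
    (hmono : ∀ s : Fin d →₀ ℕ, (MvPolynomial.monomial s (1 : ℂ)) ∉ M)
    (S : Set (Fin d →₀ ℕ)) (hS : S.Nonempty)
    (hmm : mm = Ideal.span ((fun s => MvPolynomial.monomial s (1 : ℂ)) '' S)) :
    (M ⊓ mm).colon mm = M := by
  apply le_antisymm
  · intro f hf
    obtain ⟨s, hsS⟩ := hS
    have hsmm : (MvPolynomial.monomial s (1 : ℂ)) ∈ mm := by
      rw [hmm]; exact Ideal.subset_span ⟨s, hsS, rfl⟩
    have := (Submodule.mem_colon.mp hf) _ hsmm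
    have hM' : f * (MvPolynomial.monomial s (1 : ℂ)) ∈ M := by
      simpa [smul_eq_mul] using this.1
    rcases hM.mul_mem_iff_mem_or_mem.mp hM' with h | h
    · exact h
    · exact absurd h (hmono s)
  · intro f hf
    rw [Submodule.mem_colon]
    intro p hp
    exact ⟨by simpa [smul_eq_mul] using M.mul_mem_right p hf,
      by simpa [smul_eq_mul] using mm.mul_mem_left f hp⟩
end

section
/- Let f be a k-focal polynomial of cameras σ = {σ_1,...,σ_k} (a maximal (4+k)×(4+k) minor of A_σ(p)), and let τ ⊃ σ with |τ| = l > k. Then for any choice of one variable w_{τ_i} ∈ {x_{τ_i}, y_{τ_i}, z_{τ_i}} for each index τ_i ∈ τ\σ, the product (∏_{i=1}^{l−k} w_{τ_i}) · f is an l-focal polynomial of the cameras τ, i.e., a maximal minor of A_τ(p). In particular, the l-focal ideal contains this monomial multiple of f. -/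
/-- The partially symbolic matrix `A_σ(p)` of a camera arrangement `A` restricted to the
cameras `σ` (block rows `[A_{σ i} | 0 … p_{σ i} … 0]`). -/
noncomputable def focalMatrix {n k : ℕ} (A : Fin n → Matrix (Fin 3) (Fin 4) ℝ)
    (σ : Fin k → Fin n) :
    Matrix (Fin k × Fin 3) (Fin 4 ⊕ Fin k) (MvPolynomial (Fin n × Fin 3) ℂ) :=
  Matrix.of fun r c =>
    match c with
    | Sum.inl c' => MvPolynomial.C ((A (σ r.1) r.2 c' : ℝ) : ℂ)
    | Sum.inr j => if r.1 = j then MvPolynomial.X (σ r.1, r.2) else 0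

/-- Bumping lemma: a `k`-focal polynomial `f` of the cameras `σ` (here `σ` consists of the
first `k` cameras of `τ : Fin (k+m) → Fin n`), multiplied by one image-plane variable
`w j ∈ {x,y,z}` for each of the `m` extra cameras of `τ`, is an `l`-focal polynomial
(`l = k + m > k`) of the cameras `τ`, i.e. a maximal minor of `A_τ(p)`. -/
theorem focal_bumping {n k m : ℕ} (hk : 2 ≤ k) (hm : 0 < m)
    (A : Fin n → Matrix (Fin 3) (Fin 4) ℝ)
    (τ : Fin (k + m) → Fin n) (hτ : Function.Injective τ)
    (fsel : Fin 4 ⊕ Fin k → Fin k × Fin 3) (hf : Function.Injective fsel)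
    (w : Fin m → Fin 3) :
    ∃ g : Fin 4 ⊕ Fin (k + m) → Fin (k + m) × Fin 3, Function.Injective g ∧
      ((focalMatrix A τ).submatrix g id).det =
        (∏ j : Fin m, MvPolynomial.X (τ (Fin.natAdd k j), w j)) *
          ((focalMatrix A (fun i => τ (Fin.castAdd m i))).submatrix fsel id).det := by
  classical
  -- reindexing equivalence
  set e : (Fin 4 ⊕ Fin (k + m)) ≃ ((Fin 4 ⊕ Fin k) ⊕ Fin m) :=
    (Equiv.sumCongr (Equiv.refl (Fin 4)) finSumFinEquiv.symm).trans
      (Equiv.sumAssoc (Fin 4) (Fin k) (Fin m)).symm with he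
  -- the selection on the reindexed type
  set g0 : (Fin 4 ⊕ Fin k) ⊕ Fin m → Fin (k + m) × Fin 3 :=
    Sum.elim (fun i => (Fin.castAdd m (fsel i).1, (fsel i).2))
      (fun j => (Fin.natAdd k j, w j)) with hg0
  have hg0inj : Function.Injective g0 := by
    intro a b hab
    rcases a with a | a <;> rcases b with b | b <;> simp only [hg0, Sum.elim_inl,
      Sum.elim_inr, Prod.mk.injEq] at hab
    · have h1 : (fsel a).1 = (fsel b).1 :=
        Fin.castAdd_injective _ _ hab.1
      have : fsel a = fsel b := Prod.ext h1 hab.2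
      exact congrArg Sum.inl (hf this)
    · exact absurd (congrArg Fin.val hab.1) (by
        have := ((fsel a).1).isLt; simp [Fin.castAdd, Fin.natAdd]; omega)
    · exact absurd (congrArg Fin.val hab.1) (by
        have := ((fsel b).1).isLt; simp [Fin.castAdd, Fin.natAdd]; omega)
    · refine congrArg Sum.inr ?_
      have := congrArg Fin.val hab.1
      simp [Fin.natAdd] at this
      exact Fin.ext this
  refine ⟨g0 ∘ e, hg0inj.comp e.injective, ?_⟩
  -- the reindexed matrix
  set M : Matrix ((Fin 4 ⊕ Fin k) ⊕ Fin m) ((Fin 4 ⊕ Fin k) ⊕ Fin m)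
      (MvPolynomial (Fin n × Fin 3) ℂ) :=
    (focalMatrix A τ).submatrix g0 e.symm with hM
  have hsub : (focalMatrix A τ).submatrix (g0 ∘ e) id = M.submatrix e e := by
    ext r c
    simp [hM, Matrix.submatrix_apply]
  rw [hsub, Matrix.det_submatrix_equiv_self]
  -- block structure
  have hcastne : ∀ (a : Fin k) (j : Fin m),
      Fin.castAdd m a ≠ Fin.natAdd k j := by
    intro a j h
    have := a.isLt
    have h' := congrArg Fin.val h
    simp [Fin.castAdd, Fin.natAdd] at h'
    omega
  have hMblocks : M = Matrix.fromBlocks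
      ((focalMatrix A (fun i => τ (Fin.castAdd m i))).submatrix fsel id)
      0
      (Matrix.of fun (j : Fin m) (c : Fin 4 ⊕ Fin k) =>
        match c with
        | Sum.inl c' => MvPolynomial.C ((A (τ (Fin.natAdd k j)) (w j) c' : ℝ) : ℂ)
        | Sum.inr _ => 0)
      (Matrix.diagonal fun j => MvPolynomial.X (τ (Fin.natAdd k j), w j)) := by
    refine Matrix.ext fun r c => ?_
    rcases r with (r | r) | r <;> rcases c with (c | c) | c <;>
      simp only [hM, he, hg0, Matrix.submatrix_apply, Equiv.symm_trans_apply,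
        Equiv.symm_symm, Equiv.sumAssoc_apply_inl_inl, Equiv.sumAssoc_apply_inl_inr,
        Equiv.sumAssoc_apply_inr, Equiv.sumCongr_apply, Sum.map_inl, Sum.map_inr,
        Equiv.refl_apply, Equiv.sumCongr_symm, finSumFinEquiv_apply_left, finSumFinEquiv_apply_right,
        Sum.elim_inl, Sum.elim_inr, focalMatrix, Matrix.of_apply,
        Matrix.fromBlocks_apply₁₁, Matrix.fromBlocks_apply₁₂,
        Matrix.fromBlocks_apply₂₁, Matrix.fromBlocks_apply₂₂,
        Matrix.zero_apply, Matrix.diagonal, id_eq]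
    · rfl
    · congr 1
      simp [Fin.castAdd_inj]
    · simp [hcastne (fsel (Sum.inl r)).1 c]
    · rfl
    · congr 1
      simp [Fin.castAdd_inj]
    · simp [hcastne (fsel (Sum.inr r)).1 c]
    · rfl
    · simp [(hcastne c r).symm]
    · have : (Fin.natAdd k r = Fin.natAdd k c) ↔ r = c := by
        constructor
        · intro h; exact Fin.ext (by have := congrArg Fin.val h; simp [Fin.natAdd] at this; exact this)
        · intro h; rw [h]
      by_cases h : r = c
      · simp [h]
      · rw [if_neg (fun hh => h (this.mp hh)), if_neg h]
  rw [hMblocks, Matrix.det_fromBlocks_zero₁₂, Matrix.det_diagonal, mul_comm]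
end
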